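/- arXiv:1508.07733 — 2 statements merged into one kernel-verified Lean document; each statement's English description precedes it below -/
import Mathlib

section
/- Let G be a finite connected graph and v a vertex of G. If there exists a vertex x ∈ N_2(v) and two distinct connected components Q_i and Q_j of the induced subgraph G[N_3(v) ∪ N_4(v)] such that x is adjacent to every vertex of Q_i and to every vertex of Q_j, then G has no efficient dominating set containing v. -/
open SimpleGraph

/-- The `i`-th distance level of a vertex `v`: the set of vertices at distance exactly `i`
from `v` in `G`. -/
def distLevel {V : Type*} (G : SimpleGraph V) (v : V) (i : ℕ) : Set V :=
  {u : V | G.dist v u = i}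

/-- A graph is `P₆`-free if it contains no induced subgraph isomorphic to the chordless
path on 6 vertices. -/
def P6Free {V : Type*} (G : SimpleGraph V) : Prop :=
  ¬ ∃ f : Fin 6 ↪ V, ∀ i j : Fin 6,
      G.Adj (f i) (f j) ↔ ((i : ℕ) + 1 = (j : ℕ) ∨ (j : ℕ) + 1 = (i : ℕ))

/-- `D` is an efficient dominating set of `G`: every vertex is dominated by exactly one
vertex of `D` (a vertex dominates itself and its neighbors). -/
def IsEDS {V : Type*} (G : SimpleGraph V) (D : Set V) : Prop :=
  ∀ u : V, ∃! d : V, d ∈ D ∧ (d = u ∨ G.Adj d u)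

/-- `Q` is (the vertex set of) a connected component of the subgraph of `G` induced by `S`:
`Q` is a nonempty subset of `S`, `Q` induces a connected graph, and `Q` is closed under
adjacency within `S`. -/
def IsCompOf {V : Type*} (G : SimpleGraph V) (S Q : Set V) : Prop :=
  Q ⊆ S ∧ Q.Nonempty ∧ (G.induce Q).Connected ∧
    ∀ x ∈ Q, ∀ y ∈ S, G.Adj x y → y ∈ Q


private lemma exists_pred' {V : Type*} {G : SimpleGraph V} (hconn : G.Connected) {v q : V} {n : ℕ}
    (h : G.dist v q = n + 1) : ∃ q', G.Adj q q' ∧ G.dist v q' = n := by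
  obtain ⟨w, hw⟩ := hconn.exists_walk_length_eq_dist v q
  have hl : w.reverse.length = n + 1 := by rw [SimpleGraph.Walk.length_reverse, hw, h]
  cases hr : w.reverse with
  | nil => rw [hr] at hl; simp at hl
  | cons hadj p =>
    rename_i q'
    refine ⟨q', hadj, le_antisymm ?_ ?_⟩
    · have := SimpleGraph.dist_le p
      rw [hr] at hl
      simp [SimpleGraph.Walk.length_cons] at hl
      have hc : G.dist v q' = G.dist q' v := SimpleGraph.dist_comm ..
      omega
    · have htri := hconn.dist_triangle (u := v) (v := q') (w := q)
      have h1 : G.dist q' q = 1 := SimpleGraph.dist_eq_one_iff_adj.mpr hadj.symm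
      omega

private lemma comp_subset' {V : Type*} {G : SimpleGraph V} {S Qi Qj : Set V}
    (hQi : IsCompOf G S Qi) (hQj : IsCompOf G S Qj) {z : V} (hzi : z ∈ Qi) (hzj : z ∈ Qj) :
    Qi ⊆ Qj := by
  intro y hy
  obtain ⟨w⟩ := hQi.2.2.1.preconnected ⟨z, hzi⟩ ⟨y, hy⟩
  suffices h : ∀ (p q : Qi) (_ : (G.induce Qi).Walk p q), (p : V) ∈ Qj → (q : V) ∈ Qj from
    h _ _ w hzj
  intro p q w
  induction w with
  | nil => exact id
  | cons hadj _ ih =>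
    rename_i u m _ _
    intro hp
    have hm : (m : V) ∈ Qj := hQj.2.2.2 _ hp _ (hQi.1 m.2) hadj
    exact ih hm

/-- If some vertex `x ∈ N₂(v)` has a join to two distinct connected components of
`G[N₃(v) ∪ N₄(v)]`, then `G` has no efficient dominating set containing `v`. -/
theorem stmt_4 {V : Type*} [Fintype V] (G : SimpleGraph V) (hconn : G.Connected)
    (v x : V) (hx : x ∈ distLevel G v 2) (Qi Qj : Set V)
    (hQi : IsCompOf G (distLevel G v 3 ∪ distLevel G v 4) Qi)
    (hQj : IsCompOf G (distLevel G v 3 ∪ distLevel G v 4) Qj)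
    (hne : Qi ≠ Qj)
    (hjoini : ∀ y ∈ Qi, G.Adj x y) (hjoinj : ∀ y ∈ Qj, G.Adj x y) :
    ¬ ∃ D : Set V, IsEDS G D ∧ v ∈ D := by
  rintro ⟨D, hD, hvD⟩
  have hN1 : ∀ d ∈ D, ¬ G.Adj d v := by
    intro d hd hadj
    have he : d = v := (hD v).unique ⟨hd, Or.inr hadj⟩ ⟨hvD, Or.inl rfl⟩
    exact G.irrefl (he ▸ hadj)
  have hN2 : ∀ d ∈ D, G.dist v d ≠ 2 := by
    intro d hd h2
    obtain ⟨u, hud, hu1⟩ := exists_pred' hconn h2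
    have huv : G.Adj v u := SimpleGraph.dist_eq_one_iff_adj.mp hu1
    have he : v = d := (hD u).unique ⟨hvD, Or.inr huv⟩ ⟨hd, Or.inr hud⟩
    rw [← he] at h2
    simp [SimpleGraph.dist_self] at h2
  have key : ∀ Q : Set V, IsCompOf G (distLevel G v 3 ∪ distLevel G v 4) Q →
      ∃ d, d ∈ Q ∧ d ∈ D := by
    intro Q hQ
    obtain ⟨q, hq⟩ := hQ.2.1
    have hqS := hQ.1 hq
    have hstep : ∃ a, a ∈ Q ∧ G.dist v a = 3 := by
      rcases hqS with h3 | h4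
      · exact ⟨q, hq, h3⟩
      · obtain ⟨a, haq, ha3⟩ := exists_pred' hconn (show G.dist v q = 3 + 1 from h4)
        exact ⟨a, hQ.2.2.2 q hq a (Or.inl ha3) haq, ha3⟩
    obtain ⟨a, haQ, ha3⟩ := hstep
    obtain ⟨d, ⟨hdD, hdom⟩, -⟩ := hD a
    rcases hdom with rfl | hadj
    · exact ⟨d, haQ, hdD⟩
    · have hda : G.dist d a = 1 := SimpleGraph.dist_eq_one_iff_adj.mpr hadj
      have had : G.dist a d = 1 := SimpleGraph.dist_eq_one_iff_adj.mpr hadj.symm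
      have ht1 := hconn.dist_triangle (u := v) (v := a) (w := d)
      have ht2 := hconn.dist_triangle (u := v) (v := d) (w := a)
      have ne1 : G.dist v d ≠ 1 := fun h =>
        hN1 d hdD (SimpleGraph.dist_eq_one_iff_adj.mp h).symm
      have ne2 := hN2 d hdD
      have h34 : G.dist v d = 3 ∨ G.dist v d = 4 := by omega
      exact ⟨d, hQ.2.2.2 a haQ d h34 hadj.symm, hdD⟩
  obtain ⟨di, hdiQ, hdiD⟩ := key Qi hQi
  obtain ⟨dj, hdjQ, hdjD⟩ := key Qj hQj
  have hij : di = dj :=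
    (hD x).unique ⟨hdiD, Or.inr (hjoini di hdiQ).symm⟩ ⟨hdjD, Or.inr (hjoinj dj hdjQ).symm⟩
  have hdiQj : di ∈ Qj := hij ▸ hdjQ
  exact hne (Set.Subset.antisymm (comp_subset' hQi hQj hdiQ hdiQj)
    (comp_subset' hQj hQi hdiQj hdiQ))
end

section
/- Let G be a finite connected P6-free graph, v a vertex of G, D an efficient dominating set of G with v ∈ D, b* ∈ N_2(v), and q* ∈ D ∩ N_3(v) the unique vertex of D adjacent to b* (i.e., D ∩ N[b*] = {q*}). Let Q_1 be the connected component of the induced subgraph G[N_3(v) ∪ N_4(v)] containing q*, and set Z = N[q*] ∩ Q_1, W = (N(b*) ∩ Q_1) \ Z, and Y = Q_1 \ (Z ∪ W). Then there is no edge of G between Z and Y, i.e., Z has a co-join to Y. -/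
open SimpleGraph

/-!
Suppose `z ∼ y`. Then `z ∼ q*`, and some `a` satisfies `v ∼ a ∼ b*`; distance levels forbid
every chord from `v` or `a` to the vertices at distance at least 3. If `b* ≁ z`, then
`v - a - b* - q* - z - y` is an induced `P₆`. If `b* ∼ z`, then `y ∉ D` (its neighbour `z` is
already dominated by `q*`), and the dominator `d` of `y` is adjacent to none of `v, a, b*, z`,
whose dominators are `v, v, q*, q*`; so `v - a - b* - z - y - d` is an induced `P₆`.
-/

theorem P6Free.false_of_induced_path {V : Type*} {G : SimpleGraph V} (hP6 : P6Free G)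
    {x₀ x₁ x₂ x₃ x₄ x₅ : V}
    (h₀₁ : G.Adj x₀ x₁) (h₁₂ : G.Adj x₁ x₂) (h₂₃ : G.Adj x₂ x₃) (h₃₄ : G.Adj x₃ x₄)
    (h₄₅ : G.Adj x₄ x₅)
    (h₀₂ : ¬G.Adj x₀ x₂) (h₀₃ : ¬G.Adj x₀ x₃) (h₀₄ : ¬G.Adj x₀ x₄) (h₀₅ : ¬G.Adj x₀ x₅)
    (h₁₃ : ¬G.Adj x₁ x₃) (h₁₄ : ¬G.Adj x₁ x₄) (h₁₅ : ¬G.Adj x₁ x₅)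
    (h₂₄ : ¬G.Adj x₂ x₄) (h₂₅ : ¬G.Adj x₂ x₅) (h₃₅ : ¬G.Adj x₃ x₅) : False := by
  set f : Fin 6 → V := ![x₀, x₁, x₂, x₃, x₄, x₅]
  have hf : ∀ i j : Fin 6, G.Adj (f i) (f j) ↔ ((i : ℕ) + 1 = j ∨ (j : ℕ) + 1 = i) := by
    intro i j
    fin_cases i <;> fin_cases j <;> simp [f, G.adj_comm, *]
  -- `P₆` has no two vertices with the same neighbourhood.
  have hinj : Function.Injective f := by
    have twins_free : ∀ i j : Fin 6, i ≠ j → ∃ k : Fin 6,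
        ¬(((i : ℕ) + 1 = k ∨ (k : ℕ) + 1 = i) ↔ ((j : ℕ) + 1 = k ∨ (k : ℕ) + 1 = j)) := by
      decide
    intro i j hij
    by_contra hne
    obtain ⟨k, hk⟩ := twins_free i j hne
    exact hk (by rw [← hf, ← hf, hij])
  exact hP6 ⟨⟨f, hinj⟩, hf⟩

namespace SimpleGraph

variable {V : Type*} {G : SimpleGraph V}

theorem not_adj_of_dist_add_two_le {u x y : V} (h : G.dist u x + 2 ≤ G.dist u y) :
    ¬G.Adj x y := fun hxy => by
  rcases hxy.diff_dist_adj (u := u) with h' | h' | h' <;> omega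

theorem exists_adj_adj_of_dist_eq_two {u w : V} (h : G.dist u w = 2) :
    ∃ x, G.Adj u x ∧ G.Adj x w := by
  have hr : G.Reachable u w := Reachable.of_dist_ne_zero (by omega)
  have hedist : G.edist u w = 2 := by rw [← hr.coe_dist_eq_edist, h]; rfl
  obtain ⟨x, hux, hwx⟩ := (edist_eq_two_iff.mp hedist).2.2
  exact ⟨x, hux, hwx.symm⟩

end SimpleGraph

namespace IsEDS

variable {V : Type*} {G : SimpleGraph V} {D : Set V}

theorem eq_of_adj_of_adj (hD : IsEDS G D) {u d d' : V} (hd : d ∈ D) (hd' : d' ∈ D)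
    (h : G.Adj d u) (h' : G.Adj d' u) : d = d' :=
  (hD u).unique ⟨hd, .inr h⟩ ⟨hd', .inr h'⟩

theorem eq_of_adj_of_mem (hD : IsEDS G D) {u d : V} (hd : d ∈ D) (hu : u ∈ D)
    (h : G.Adj d u) : d = u :=
  (hD u).unique ⟨hd, .inr h⟩ ⟨hu, .inl rfl⟩

theorem exists_adj_of_notMem (hD : IsEDS G D) {u : V} (hu : u ∉ D) : ∃ d ∈ D, G.Adj d u := by
  obtain ⟨d, ⟨hd, rfl | hdu⟩, -⟩ := hD u
  · exact absurd hd hu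
  · exact ⟨d, hd, hdu⟩

end IsEDS

theorem P6Free.not_adj_of_isEDS {V : Type*} {G : SimpleGraph V} (hP6 : P6Free G) {D : Set V}
    (hD : IsEDS G D) {v a b q z y : V} (hv : v ∈ D) (hq : q ∈ D)
    (hva : G.Adj v a) (hab : G.Adj a b) (hbq : G.Adj b q) (hqz : G.Adj q z)
    (hvb : ¬G.Adj v b) (hvq : ¬G.Adj v q) (hvz : ¬G.Adj v z) (hvy : ¬G.Adj v y)
    (haq : ¬G.Adj a q) (haz : ¬G.Adj a z) (hay : ¬G.Adj a y)
    (hby : ¬G.Adj b y) (hqy : ¬G.Adj q y) (hyq : y ≠ q) : ¬G.Adj z y := by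
  intro hzy
  by_cases hbz : G.Adj b z
  · have hyD : y ∉ D := fun hyD => hyq (hD.eq_of_adj_of_adj hyD hq hzy.symm hqz)
    obtain ⟨d, hd, hdy⟩ := hD.exists_adj_of_notMem hyD
    have hdv : d ≠ v := by rintro rfl; exact hvy hdy
    have hdq : d ≠ q := by rintro rfl; exact hqy hdy
    exact hP6.false_of_induced_path hva hab hbz hzy hdy.symm hvb hvz hvy
      (fun h => hdv (hD.eq_of_adj_of_mem hd hv h.symm)) haz hay
      (fun h => hdv (hD.eq_of_adj_of_adj hd hv h.symm hva)) hby
      (fun h => hdq (hD.eq_of_adj_of_adj hd hq h.symm hbq.symm))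
      (fun h => hdq (hD.eq_of_adj_of_adj hd hq h.symm hqz))
  · exact hP6.false_of_induced_path hva hab hbq hqz hzy hvb hvq hvz hvy haq haz hay hbz hby hqy

theorem stmt_11_general {V : Type*} (G : SimpleGraph V)
    (hP6 : P6Free G) (D : Set V) (hD : IsEDS G D) (v : V) (hv : v ∈ D)
    (bstar : V) (hb : bstar ∈ distLevel G v 2)
    (qstar : V) (hq : qstar ∈ D ∩ distLevel G v 3)
    (huniq : D ∩ insert bstar (G.neighborSet bstar) = {qstar})
    (Q₁ : Set V) (hQ₁ : IsCompOf G (distLevel G v 3 ∪ distLevel G v 4) Q₁)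
    (Z W Y : Set V)
    (hZ : Z = insert qstar (G.neighborSet qstar) ∩ Q₁)
    (hW : W = (G.neighborSet bstar ∩ Q₁) \ Z)
    (hY : Y = Q₁ \ (Z ∪ W)) :
    ∀ z ∈ Z, ∀ y ∈ Y, ¬ G.Adj z y := by
  subst hZ hW hY
  rintro z ⟨hzq, hzQ⟩ y ⟨hyQ, hyZW⟩ hzy
  obtain ⟨hqD, hq3 : G.dist v qstar = 3⟩ := hq
  have hb2 : G.dist v bstar = 2 := hb
  have hQ₁far : ∀ x ∈ Q₁, 3 ≤ G.dist v x := fun x hx => by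
    rcases hQ₁.1 hx with (h : G.dist v x = 3) | (h : G.dist v x = 4) <;> omega
  have hyq : y ∉ insert qstar (G.neighborSet qstar) := fun h => hyZW (.inl ⟨h, hyQ⟩)
  have hby : ¬G.Adj bstar y := fun h => hyZW (.inr ⟨⟨h, hyQ⟩, fun h' => hyq h'.1⟩)
  have hqz : G.Adj qstar z := by
    rcases hzq with rfl | h
    · exact absurd (.inr hzy) hyq
    · exact h
  have hbq : G.Adj bstar qstar := by
    have hqb : qstar ∈ D ∩ insert bstar (G.neighborSet bstar) := huniq.symm ▸ rfl
    rcases hqb.2 with h | h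
    · rw [h] at hq3; omega
    · exact h
  obtain ⟨a, hva, hab⟩ := exists_adj_adj_of_dist_eq_two hb2
  have hv0 : G.dist v v = 0 := dist_self
  have ha1 : G.dist v a = 1 := dist_eq_one_iff_adj.mpr hva
  have hz3 := hQ₁far z hzQ
  have hy3 := hQ₁far y hyQ
  refine hP6.not_adj_of_isEDS hD hv hqD hva hab hbq hqz ?_ ?_ ?_ ?_ ?_ ?_ ?_ hby
    (fun h => hyq (.inr h)) (fun h => hyq (.inl h)) hzy <;>
    exact not_adj_of_dist_add_two_le (u := v) (by omega)

/-- Setup as before, with `G` additionally `P₆`-free, and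
`Y = Q₁ \ (Z ∪ W)`. Then there is no edge between `Z` and `Y`. -/
theorem stmt_11 {V : Type*} [Fintype V] (G : SimpleGraph V) (hconn : G.Connected)
    (hP6 : P6Free G) (D : Set V) (hD : IsEDS G D) (v : V) (hv : v ∈ D)
    (bstar : V) (hb : bstar ∈ distLevel G v 2)
    (qstar : V) (hq : qstar ∈ D ∩ distLevel G v 3)
    (huniq : D ∩ insert bstar (G.neighborSet bstar) = {qstar})
    (Q₁ : Set V) (hQ₁ : IsCompOf G (distLevel G v 3 ∪ distLevel G v 4) Q₁)
    (hqQ : qstar ∈ Q₁)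
    (Z W Y : Set V)
    (hZ : Z = insert qstar (G.neighborSet qstar) ∩ Q₁)
    (hW : W = (G.neighborSet bstar ∩ Q₁) \ Z)
    (hY : Y = Q₁ \ (Z ∪ W)) :
    ∀ z ∈ Z, ∀ y ∈ Y, ¬ G.Adj z y :=
  stmt_11_general G hP6 D hD v hv bstar hb qstar hq huniq Q₁ hQ₁ Z W Y hZ hW hY
end
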